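/- Let χ be a real primitive Dirichlet character modulo q₀ ≥ 3 and λ = 1⋆χ. Let j ≥ 0 be an integer and let u be a squarefree positive integer with λ(u) ≠ 0. Then λ_j(u) = λ(u) · ∑_{q ∣ u} Λ*_j(q), where the sum is over the positive divisors q of u. -/

import Mathlib

open Complex

/-- `λ = 1 ⋆ χ`. -/
noncomputable def lamFun {q₀ : ℕ} (χ : DirichletCharacter ℂ q₀) (n : ℕ) : ℂ :=
  ∑ d ∈ n.divisors, χ (d : ZMod q₀)

/-- The generalized von Mangoldt function `Λ_j = μ ⋆ (log)^j`. -/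
noncomputable def LambdaJ (j : ℕ) (n : ℕ) : ℝ :=
  ∑ d ∈ n.divisors, (ArithmeticFunction.moebius d : ℝ) * Real.log ((n / d : ℕ) : ℝ) ^ j

/-- `Λ*_j(q) = (τ(gcd(q,q₀)) / (2^j·τ(q))) · ∑_{mn=q} χ(m) ∑_{a+b=j} C(j,a)·(−1)^b·Λ_a(m)·Λ_b(n)`. -/
noncomputable def LambdaStar {q₀ : ℕ} (χ : DirichletCharacter ℂ q₀) (j : ℕ) (q : ℕ) : ℂ :=
  (((Nat.gcd q q₀).divisors.card : ℂ) / (2 ^ j * (q.divisors.card : ℂ))) *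
    ∑ m ∈ q.divisors, χ (m : ZMod q₀) *
      ∑ p ∈ Finset.HasAntidiagonal.antidiagonal j,
        (j.choose p.1 : ℂ) * (-1) ^ p.2 * (LambdaJ p.1 m : ℂ) * (LambdaJ p.2 (q / m) : ℂ)

/-- `λ_j(u) = ∑_{c ∣ u} χ(c)·(log(c/√u))^j`. -/
noncomputable def lamJ {q₀ : ℕ} (χ : DirichletCharacter ℂ q₀) (j : ℕ) (u : ℕ) : ℂ :=
  ∑ c ∈ u.divisors, χ (c : ZMod q₀) * ((Real.log ((c : ℝ) / Real.sqrt u)) ^ j : ℝ)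

/-!
For `c ∣ u` we have `log (c / √u) = (log c - log (u / c)) / 2`; expanding the `j`-th power
binomially and writing `log^a = 1 ⋆ Λ_a` turns `2^j λ_j` into
`∑_{a+b=j} C(j,a) (-1)^b (χ·(1 ⋆ Λ_a)) ⋆ (1 ⋆ Λ_b)`. As `χ` is completely multiplicative,
`χ·(1 ⋆ Λ_a) = χ ⋆ χΛ_a`, so each term equals `(χΛ_a ⋆ Λ_b) ⋆ λ`; evaluated at `u` this is
`∑_{q ∣ u} K(q) λ(u/q)`, where `K` is the sum over `mn = q` in `Λ*_j`. For squarefree `u` with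
`λ(u) ≠ 0` one has `λ(u/q) = λ(u) / λ(q)`, and `λ(q) τ(gcd(q, q₀)) = τ(q)` is checked prime by
prime: since `χ` is real, `λ(p)` is `1` if `p ∣ q₀` and `2` otherwise.
-/

open Finset ArithmeticFunction
open scoped ArithmeticFunction.zeta ArithmeticFunction.Moebius

theorem ArithmeticFunction.pmul_mul_of_map_mul {R : Type*} [CommSemiring R]
    {c : ArithmeticFunction R} (hc : ∀ m n, c (m * n) = c m * c n) (f g : ArithmeticFunction R) :
    c.pmul (f * g) = c.pmul f * c.pmul g := by
  ext n
  simp only [pmul_apply, mul_apply, Finset.mul_sum]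
  refine Finset.sum_congr rfl fun x hx => ?_
  rw [← (Nat.mem_divisorsAntidiagonal.1 hx).1, hc]
  ring

instance {R : Type*} [AddMonoid R] : IsZeroApply (ArithmeticFunction R) ℕ R :=
  ⟨fun _ => zero_apply⟩

instance {R : Type*} [AddMonoid R] : IsAddApply (ArithmeticFunction R) ℕ R :=
  ⟨fun _ _ _ => add_apply⟩

theorem sub_pow_eq_sum_antidiagonal {R : Type*} [CommRing R] (x y : R) (j : ℕ) :
    (x - y) ^ j = ∑ p ∈ antidiagonal j, (j.choose p.1 : R) * (-1) ^ p.2 * x ^ p.1 * y ^ p.2 := by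
  rw [sub_eq_add_neg, add_pow, Finset.Nat.sum_antidiagonal_eq_sum_range_succ_mk]
  refine Finset.sum_congr rfl fun k _ => ?_
  rw [neg_pow]
  ring

theorem Real.log_div_sqrt_mul {x y : ℝ} (hx : 0 < x) (hy : 0 < y) :
    Real.log (x / Real.sqrt (x * y)) = (Real.log x - Real.log y) / 2 := by
  rw [Real.log_div hx.ne' (Real.sqrt_pos.2 (mul_pos hx hy)).ne', Real.log_sqrt (mul_pos hx hy).le,
    Real.log_mul hx.ne' hy.ne']
  ring

theorem Nat.div_ne_zero_of_mem_divisors {d n : ℕ} (h : d ∈ n.divisors) : n / d ≠ 0 :=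
  (Nat.div_ne_zero_iff_of_dvd (Nat.dvd_of_mem_divisors h)).2
    ⟨Nat.ne_zero_of_mem_divisors h, (Nat.pos_of_mem_divisors h).ne'⟩

noncomputable def logPowArith (j : ℕ) : ArithmeticFunction ℂ :=
  toArithmeticFunction fun n => ((Real.log n ^ j : ℝ) : ℂ)

noncomputable def LambdaJArith (j : ℕ) : ArithmeticFunction ℂ :=
  toArithmeticFunction fun n => (LambdaJ j n : ℂ)

theorem logPowArith_apply {j n : ℕ} (hn : n ≠ 0) : logPowArith j n = (Real.log n : ℂ) ^ j := by
  simp [logPowArith, toArithmeticFunction, hn]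

theorem LambdaJArith_apply {j n : ℕ} (hn : n ≠ 0) : LambdaJArith j n = LambdaJ j n := by
  simp [LambdaJArith, toArithmeticFunction, hn]

theorem LambdaJArith_eq_moebius_mul (j : ℕ) : LambdaJArith j = μ * logPowArith j := by
  ext n
  rcases eq_or_ne n 0 with rfl | hn
  · simp
  rw [LambdaJArith_apply hn, mul_apply,
    Nat.sum_divisorsAntidiagonal fun a b => (μ : ArithmeticFunction ℂ) a * logPowArith j b,
    LambdaJ, Complex.ofReal_sum]
  refine Finset.sum_congr rfl fun d hd => ?_
  rw [logPowArith_apply (Nat.div_ne_zero_of_mem_divisors hd)]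
  simp

theorem zeta_mul_LambdaJArith (j : ℕ) : ζ * LambdaJArith j = logPowArith j := by
  rw [LambdaJArith_eq_moebius_mul, ← mul_assoc, coe_zeta_mul_coe_moebius, one_mul]

section

variable {q₀ : ℕ} (χ : DirichletCharacter ℂ q₀)

theorem DirichletCharacter.toArithmeticFunction_map_mul (m n : ℕ) :
    toArithmeticFunction (χ ·) (m * n) =
      toArithmeticFunction (χ ·) m * toArithmeticFunction (χ ·) n := by
  by_cases hm : m = 0 <;> by_cases hn : n = 0 <;> simp [toArithmeticFunction, hm, hn]

theorem pmul_zeta_mul_mul_zeta_mul (F G : ArithmeticFunction ℂ) :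
    (toArithmeticFunction (χ ·)).pmul (ζ * F) * (ζ * G) =
      (toArithmeticFunction (χ ·)).pmul F * G * χ.zetaMul := by
  rw [pmul_mul_of_map_mul (DirichletCharacter.toArithmeticFunction_map_mul χ), pmul_zeta,
    DirichletCharacter.zetaMul]
  ring

noncomputable def binomialTwist (A : ℕ → ArithmeticFunction ℂ) (j : ℕ) : ArithmeticFunction ℂ :=
  ∑ p ∈ antidiagonal j,
    ((j.choose p.1 : ℂ) * (-1) ^ p.2) • ((toArithmeticFunction (χ ·)).pmul (A p.1) * A p.2)

theorem binomialTwist_zeta_mul (A : ℕ → ArithmeticFunction ℂ) (j : ℕ) :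
    binomialTwist χ (fun a => ζ * A a) j = binomialTwist χ A j * χ.zetaMul := by
  simp only [binomialTwist, pmul_zeta_mul_mul_zeta_mul, Finset.sum_mul, smul_mul_assoc]

theorem binomialTwist_apply (A : ℕ → ArithmeticFunction ℂ) (j n : ℕ) :
    binomialTwist χ A j n = ∑ p ∈ antidiagonal j, (j.choose p.1 : ℂ) * (-1) ^ p.2 *
      ∑ d ∈ n.divisors, χ d * A p.1 d * A p.2 (n / d) := by
  simp only [binomialTwist]
  rw [_root_.sum_apply]
  refine Finset.sum_congr rfl fun p _ => ?_
  rw [smul_map, smul_eq_mul, mul_apply,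
    Nat.sum_divisorsAntidiagonal fun a b => (toArithmeticFunction (χ ·)).pmul (A p.1) a * A p.2 b]
  congr 1
  refine Finset.sum_congr rfl fun d hd => ?_
  rw [pmul_apply, ← χ.apply_eq_toArithmeticFunction_apply (Nat.pos_of_mem_divisors hd).ne']

theorem lamJ_eq_binomialTwist_logPowArith (j u : ℕ) :
    lamJ χ j u = (2 ^ j)⁻¹ * binomialTwist χ logPowArith j u := by
  simp only [binomialTwist_apply, lamJ, Finset.mul_sum]
  rw [Finset.sum_comm]
  refine Finset.sum_congr rfl fun c hc => ?_
  have hcu : c * (u / c) = u := Nat.mul_div_cancel' (Nat.dvd_of_mem_divisors hc)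
  have hd : u / c ≠ 0 := Nat.div_ne_zero_of_mem_divisors hc
  have hc : c ≠ 0 := (Nat.pos_of_mem_divisors hc).ne'
  have hlog : Real.log (c / Real.sqrt u) = (Real.log c - Real.log (u / c : ℕ)) / 2 := by
    rw [← Real.log_div_sqrt_mul (by positivity) (by positivity), ← Nat.cast_mul, hcu]
  rw [hlog, Complex.ofReal_pow, Complex.ofReal_div, div_pow, Complex.ofReal_sub,
    sub_pow_eq_sum_antidiagonal, Finset.sum_div, Finset.mul_sum]
  refine Finset.sum_congr rfl fun p _ => ?_
  rw [logPowArith_apply hc, logPowArith_apply hd]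
  push_cast
  ring

theorem LambdaStar_eq_binomialTwist_LambdaJArith (j q : ℕ) :
    LambdaStar χ j q = (2 ^ j)⁻¹ *
      (((Nat.gcd q q₀).divisors.card : ℂ) / q.divisors.card) * binomialTwist χ LambdaJArith j q := by
  simp only [binomialTwist_apply, LambdaStar, Finset.mul_sum]
  rw [Finset.sum_comm]
  refine Finset.sum_congr rfl fun p _ => Finset.sum_congr rfl fun m hm => ?_
  rw [LambdaJArith_apply (Nat.pos_of_mem_divisors hm).ne',
    LambdaJArith_apply (Nat.div_ne_zero_of_mem_divisors hm)]
  ring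

theorem lamFun_eq_zetaMul (n : ℕ) : lamFun χ n = χ.zetaMul n := by
  rw [lamFun, DirichletCharacter.zetaMul, coe_zeta_mul_apply]
  exact Finset.sum_congr rfl fun d hd =>
    χ.apply_eq_toArithmeticFunction_apply (Nat.pos_of_mem_divisors hd).ne'

theorem zetaMul_prime {p : ℕ} (hp : p.Prime) : χ.zetaMul p = 1 + χ p := by
  rw [← lamFun_eq_zetaMul, lamFun, hp.sum_divisors, Nat.cast_one, map_one, add_comm]

theorem zetaMul_prime_mul_card_divisors_gcd (hχ : χ.IsQuadratic) {p : ℕ} (hp : p.Prime)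
    (hne : χ.zetaMul p ≠ 0) : χ.zetaMul p * (Nat.gcd p q₀).divisors.card = p.divisors.card := by
  rw [zetaMul_prime χ hp] at hne ⊢
  rw [hp.divisors, Finset.card_pair hp.ne_one.symm]
  by_cases hpq : p ∣ q₀
  · have hχp : χ p = 0 := χ.map_nonunit <| by
      rwa [ZMod.isUnit_iff_coprime, hp.coprime_iff_not_dvd, not_not]
    rw [Nat.gcd_eq_left hpq, hp.divisors, Finset.card_pair hp.ne_one.symm, hχp]
    norm_num
  · have hunit : IsUnit (p : ZMod q₀) := by rwa [ZMod.isUnit_iff_coprime, hp.coprime_iff_not_dvd]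
    have hgcd : Nat.gcd p q₀ = 1 := hp.coprime_iff_not_dvd.2 hpq
    rcases hχ p with h | h | h
    · exact absurd h (hunit.map χ).ne_zero
    · rw [hgcd, h, Nat.divisors_one, Finset.card_singleton]
      norm_num
    · exact absurd (by rw [h]; ring) hne

theorem zetaMul_mul_card_divisors_gcd_of_squarefree (hχ : χ.IsQuadratic) {q : ℕ}
    (hq : Squarefree q) (hne : χ.zetaMul q ≠ 0) :
    χ.zetaMul q * (Nat.gcd q q₀).divisors.card = q.divisors.card := by
  induction q using Nat.recOnPosPrimePosCoprime with
  | prime_pow p k hp hk =>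
    obtain rfl : k = 1 := ((Nat.squarefree_pow_iff hp.ne_one hk.ne').1 hq).2
    rw [pow_one] at hne ⊢
    exact zetaMul_prime_mul_card_divisors_gcd χ hχ hp hne
  | zero => exact absurd hq not_squarefree_zero
  | one => simp [χ.isMultiplicative_zetaMul.map_one]
  | coprime a b _ _ hab iha ihb =>
    obtain ⟨-, ha, hb⟩ := Nat.squarefree_mul_iff.1 hq
    rw [χ.isMultiplicative_zetaMul.map_mul_of_coprime hab] at hne ⊢
    have hgcd : (Nat.gcd a q₀).Coprime (Nat.gcd b q₀) :=
      (hab.coprime_dvd_left (Nat.gcd_dvd_left a q₀)).coprime_dvd_right (Nat.gcd_dvd_left b q₀)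
    rw [hab.mul_gcd, hgcd.card_divisors_mul, hab.card_divisors_mul]
    push_cast
    rw [mul_mul_mul_comm, iha ha (left_ne_zero_of_mul hne), ihb hb (right_ne_zero_of_mul hne)]

theorem zetaMul_mul_card_div_card_of_dvd (hχ : χ.IsQuadratic) {u q : ℕ} (hu : Squarefree u)
    (hne : χ.zetaMul u ≠ 0) (hqu : q ∣ u) :
    χ.zetaMul u * (((Nat.gcd q q₀).divisors.card : ℂ) / q.divisors.card) = χ.zetaMul (u / q) := by
  obtain ⟨r, rfl⟩ := hqu
  obtain ⟨hqr, hq, -⟩ := Nat.squarefree_mul_iff.1 hu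
  have hτ : (q.divisors.card : ℂ) ≠ 0 := by simp [hq.ne_zero]
  rw [Nat.mul_div_cancel_left r (Nat.pos_of_ne_zero hq.ne_zero)]
  rw [χ.isMultiplicative_zetaMul.map_mul_of_coprime hqr] at hne ⊢
  rw [mul_comm (χ.zetaMul q), mul_assoc, ← mul_div_assoc,
    zetaMul_mul_card_divisors_gcd_of_squarefree χ hχ hq (left_ne_zero_of_mul hne),
    div_self hτ, mul_one]

end

theorem statement17 :
    ∀ (q₀ : ℕ) (χ : DirichletCharacter ℂ q₀),
      3 ≤ q₀ → χ.IsPrimitive →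
      (∀ n : ZMod q₀, χ n = -1 ∨ χ n = 0 ∨ χ n = 1) →
      ∀ j : ℕ, ∀ u : ℕ, 0 < u → Squarefree u → lamFun χ u ≠ 0 →
        lamJ χ j u = lamFun χ u * ∑ q ∈ u.divisors, LambdaStar χ j q := by
  intro q₀ χ _ _ hreal j u _ hu hne
  have hχ : χ.IsQuadratic := fun a => by rcases hreal a with h | h | h <;> simp [h]
  have hlog : logPowArith = fun a => ζ * LambdaJArith a :=
    funext fun a => (zeta_mul_LambdaJArith a).symm
  rw [lamFun_eq_zetaMul] at hne ⊢
  rw [lamJ_eq_binomialTwist_logPowArith, hlog, binomialTwist_zeta_mul, mul_apply,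
    Nat.sum_divisorsAntidiagonal fun a b => binomialTwist χ LambdaJArith j a * χ.zetaMul b,
    Finset.mul_sum, Finset.mul_sum]
  refine Finset.sum_congr rfl fun q hq => ?_
  rw [LambdaStar_eq_binomialTwist_LambdaJArith,
    ← zetaMul_mul_card_div_card_of_dvd χ hχ hu hne (Nat.dvd_of_mem_divisors hq)]
  ring
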